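/- Let X₁ and X₂ be nonnegative, arbitrarily dependent 2-dimensional random vectors such that every 2-dimensional vector formed by taking one component from each of X₁, X₂ (or both from one of them) has distribution in 𝒟₂, and the weak kernels are weakly equivalent. Then the sum X₁ + X₂ (componentwise) has distribution in 𝒟₂: for all t ∈ (0,∞]² \ {(∞,∞)} and b ∈ (0,1)², limsup_{x→∞} P[X₁₁+X₂₁ > b₁t₁x, X₁₂+X₂₂ > b₂t₂x] / P[X₁₁+X₂₁ > t₁x, X₁₂+X₂₂ > t₂x] < ∞. -/

import Mathlib

open Filter MeasureTheory Asymptotics ProbabilityTheory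

noncomputable def rtail {Ω : Type*} [MeasureSpace Ω] (Z : Ω → ℝ) (x : ℝ) : ℝ :=
  (ℙ {ω | x < Z ω}).toReal

def DomVar (T : ℝ → ℝ) : Prop :=
  ∀ b ∈ Set.Ioo (0:ℝ) 1, (fun x => T (b * x)) =O[atTop] T

def WeakEquiv (f g : ℝ → ℝ) : Prop := f =O[atTop] g ∧ g =O[atTop] f

/-- The pair `(U,V)` has a 2-dimensional dominatedly varying distribution (class `𝒟₂`):
there is a weak kernel `F₀ ∈ 𝒟` weakly equivalent to both marginal tails, the marginal
tails are dominatedly varying (dimension reduction), and the joint-tail ratio condition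
holds. -/
def D2 {Ω : Type*} [MeasureSpace Ω] (U V : Ω → ℝ) : Prop :=
  (∃ F0 : ℝ → ℝ, (∀ x, 0 < F0 x) ∧ DomVar F0 ∧
      WeakEquiv (rtail U) F0 ∧ WeakEquiv (rtail V) F0) ∧
  DomVar (rtail U) ∧ DomVar (rtail V) ∧
  ∀ t1 t2 : ℝ, 0 < t1 → 0 < t2 →
    ∀ b1 b2 : ℝ, b1 ∈ Set.Ioo (0:ℝ) 1 → b2 ∈ Set.Ioo (0:ℝ) 1 →
    (fun x => (ℙ {ω | b1 * t1 * x < U ω ∧ b2 * t2 * x < V ω}).toReal) =O[atTop]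
      fun x => (ℙ {ω | t1 * x < U ω ∧ t2 * x < V ω}).toReal

/-!
Marginals: `P[U + V > x]` lies between `P[U > x]` (as `V ≥ 0`) and `P[U > x/2] + P[V > x/2]`,
so by dominated variation and the weak equivalence of the kernels the marginal tail of the sum
is weakly equivalent to the kernel, and dominated variation passes along weak equivalence.

Joint tail: the event `{U₁ + U₂ > b₁t₁x, V₁ + V₂ > b₂t₂x}` is covered by the four events
`{Uᵢ > b₁t₁x/2, Vⱼ > b₂t₂x/2}`. Each is controlled by the `𝒟₂` condition of `(Uᵢ, Vⱼ)` with
`b/2` in place of `b`, and by nonnegativity the joint tail of `(Uᵢ, Vⱼ)` at `(t₁x, t₂x)` is at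
most that of the sum.
-/

lemma isBigO_of_nonneg_of_le {α : Type*} {l : Filter α} {f g : α → ℝ} (hf : ∀ x, 0 ≤ f x)
    (hfg : ∀ x, f x ≤ g x) : f =O[l] g :=
  isBigO_of_le l fun x => by
    rw [Real.norm_of_nonneg (hf x), Real.norm_of_nonneg ((hf x).trans (hfg x))]
    exact hfg x

lemma half_mem_Ioo_zero_one {b : ℝ} (hb : b ∈ Set.Ioo (0 : ℝ) 1) :
    b / 2 ∈ Set.Ioo (0 : ℝ) 1 :=
  ⟨by linarith [hb.1], by linarith [hb.2]⟩

namespace WeakEquiv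

variable {f g h : ℝ → ℝ}

lemma symm (hfg : WeakEquiv f g) : WeakEquiv g f := ⟨hfg.2, hfg.1⟩

lemma trans (hfg : WeakEquiv f g) (hgh : WeakEquiv g h) : WeakEquiv f h :=
  ⟨hfg.1.trans hgh.1, hgh.2.trans hfg.2⟩

end WeakEquiv

lemma DomVar.of_weakEquiv {f g : ℝ → ℝ} (hg : DomVar g) (hfg : WeakEquiv f g) : DomVar f := by
  intro b hb
  have hbx : Tendsto (fun x => b * x) atTop atTop := tendsto_id.const_mul_atTop hb.1
  exact ((hfg.1.comp_tendsto hbx).trans (hg b hb)).trans hfg.2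

section Tails

variable {Ω : Type*} [MeasureSpace Ω]

noncomputable def jointTail (U V : Ω → ℝ) (s t : ℝ) : ℝ :=
  (ℙ {ω | s < U ω ∧ t < V ω}).toReal

/-- The joint-tail conjunct of `D2`, to which it unfolds definitionally. -/
def JointDomVar (U V : Ω → ℝ) : Prop :=
  ∀ t1 t2 : ℝ, 0 < t1 → 0 < t2 →
    ∀ b1 b2 : ℝ, b1 ∈ Set.Ioo (0:ℝ) 1 → b2 ∈ Set.Ioo (0:ℝ) 1 →
    (fun x => jointTail U V (b1 * t1 * x) (b2 * t2 * x)) =O[atTop]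
      fun x => jointTail U V (t1 * x) (t2 * x)

lemma rtail_nonneg (Z : Ω → ℝ) (x : ℝ) : 0 ≤ rtail Z x := ENNReal.toReal_nonneg

lemma jointTail_nonneg (U V : Ω → ℝ) (s t : ℝ) : 0 ≤ jointTail U V s t := ENNReal.toReal_nonneg

variable [IsFiniteMeasure (ℙ : Measure Ω)]

lemma rtail_mono {Z W : Ω → ℝ} (h : ∀ ω, Z ω ≤ W ω) (x : ℝ) : rtail Z x ≤ rtail W x :=
  measureReal_mono fun ω hω => hω.trans_le (h ω)

lemma jointTail_mono {U U' V V' : Ω → ℝ} (hU : ∀ ω, U ω ≤ U' ω) (hV : ∀ ω, V ω ≤ V' ω)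
    (s t : ℝ) : jointTail U V s t ≤ jointTail U' V' s t :=
  measureReal_mono fun ω hω => ⟨hω.1.trans_le (hU ω), hω.2.trans_le (hV ω)⟩

lemma rtail_add_le (U V : Ω → ℝ) (s t : ℝ) :
    rtail (fun ω => U ω + V ω) (s + t) ≤ rtail U s + rtail V t := by
  have hsub : {ω | s + t < U ω + V ω} ⊆ {ω | s < U ω} ∪ {ω | t < V ω} :=
    fun ω (hω : s + t < U ω + V ω) => lt_or_lt_of_add_lt_add hω
  exact (measureReal_mono hsub).trans (measureReal_union_le _ _)

lemma jointTail_add_le (U1 U2 V1 V2 : Ω → ℝ) (s1 s2 t1 t2 : ℝ) :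
    jointTail (fun ω => U1 ω + U2 ω) (fun ω => V1 ω + V2 ω) (s1 + s2) (t1 + t2) ≤
      jointTail U1 V1 s1 t1 + jointTail U1 V2 s1 t2 +
        jointTail U2 V1 s2 t1 + jointTail U2 V2 s2 t2 := by
  have hsub : {ω | s1 + s2 < U1 ω + U2 ω ∧ t1 + t2 < V1 ω + V2 ω} ⊆
      {ω | s1 < U1 ω ∧ t1 < V1 ω} ∪ {ω | s1 < U1 ω ∧ t2 < V2 ω} ∪
        {ω | s2 < U2 ω ∧ t1 < V1 ω} ∪ {ω | s2 < U2 ω ∧ t2 < V2 ω} := by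
    rintro ω ⟨hU, hV⟩
    rcases lt_or_lt_of_add_lt_add hU with hU | hU <;>
      rcases lt_or_lt_of_add_lt_add hV with hV | hV <;> simp [hU, hV]
  calc jointTail (fun ω => U1 ω + U2 ω) (fun ω => V1 ω + V2 ω) (s1 + s2) (t1 + t2)
      ≤ (ℙ : Measure Ω).real ({ω | s1 < U1 ω ∧ t1 < V1 ω} ∪ {ω | s1 < U1 ω ∧ t2 < V2 ω} ∪
          {ω | s2 < U2 ω ∧ t1 < V1 ω} ∪ {ω | s2 < U2 ω ∧ t2 < V2 ω}) := measureReal_mono hsub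
    _ ≤ _ := by
      grw [measureReal_union_le, measureReal_union_le, measureReal_union_le]
      rfl

lemma weakEquiv_rtail_add {U V : Ω → ℝ} (hV : ∀ ω, 0 ≤ V ω) (hU : DomVar (rtail U))
    (hVd : DomVar (rtail V)) (hVU : rtail V =O[atTop] rtail U) :
    WeakEquiv (rtail fun ω => U ω + V ω) (rtail U) := by
  have hhalf : (1 / 2 : ℝ) ∈ Set.Ioo (0 : ℝ) 1 := by norm_num
  have hsplit : ∀ x, rtail (fun ω => U ω + V ω) x ≤ rtail U (1 / 2 * x) + rtail V (1 / 2 * x) :=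
    fun x => by
      simpa only [← add_mul, add_halves, one_mul] using rtail_add_le U V (1 / 2 * x) (1 / 2 * x)
  exact ⟨(isBigO_of_nonneg_of_le (rtail_nonneg _) hsplit).trans
      ((hU _ hhalf).add ((hVd _ hhalf).trans hVU)),
    isBigO_of_nonneg_of_le (rtail_nonneg U) (rtail_mono fun ω => le_add_of_nonneg_right (hV ω))⟩

lemma JointDomVar.add {U1 U2 V1 V2 : Ω → ℝ} (hU1 : ∀ ω, 0 ≤ U1 ω) (hU2 : ∀ ω, 0 ≤ U2 ω)
    (hV1 : ∀ ω, 0 ≤ V1 ω) (hV2 : ∀ ω, 0 ≤ V2 ω)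
    (h11 : JointDomVar U1 V1) (h12 : JointDomVar U1 V2)
    (h21 : JointDomVar U2 V1) (h22 : JointDomVar U2 V2) :
    JointDomVar (fun ω => U1 ω + U2 ω) (fun ω => V1 ω + V2 ω) := by
  intro t1 t2 ht1 ht2 b1 b2 hb1 hb2
  have hpiece : ∀ {U V : Ω → ℝ}, JointDomVar U V →
      (∀ ω, U ω ≤ U1 ω + U2 ω) → (∀ ω, V ω ≤ V1 ω + V2 ω) →
      (fun x => jointTail U V (b1 / 2 * t1 * x) (b2 / 2 * t2 * x)) =O[atTop]
        fun x => jointTail (fun ω => U1 ω + U2 ω) (fun ω => V1 ω + V2 ω) (t1 * x) (t2 * x) :=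
    fun hUV hU hV =>
      (hUV t1 t2 ht1 ht2 _ _ (half_mem_Ioo_zero_one hb1) (half_mem_Ioo_zero_one hb2)).trans
        (isBigO_of_nonneg_of_le (fun _ => jointTail_nonneg _ _ _ _)
          fun x => jointTail_mono hU hV _ _)
  have hsplit : ∀ x : ℝ,
      jointTail (fun ω => U1 ω + U2 ω) (fun ω => V1 ω + V2 ω) (b1 * t1 * x) (b2 * t2 * x) ≤
        jointTail U1 V1 (b1 / 2 * t1 * x) (b2 / 2 * t2 * x) +
          jointTail U1 V2 (b1 / 2 * t1 * x) (b2 / 2 * t2 * x) +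
          jointTail U2 V1 (b1 / 2 * t1 * x) (b2 / 2 * t2 * x) +
          jointTail U2 V2 (b1 / 2 * t1 * x) (b2 / 2 * t2 * x) := fun x => by
    have hs : b1 * t1 * x = b1 / 2 * t1 * x + b1 / 2 * t1 * x := by ring
    have ht : b2 * t2 * x = b2 / 2 * t2 * x + b2 / 2 * t2 * x := by ring
    rw [hs, ht]
    exact jointTail_add_le U1 U2 V1 V2 _ _ _ _
  have hle1 : ∀ ω, U1 ω ≤ U1 ω + U2 ω := fun ω => le_add_of_nonneg_right (hU2 ω)
  have hle2 : ∀ ω, U2 ω ≤ U1 ω + U2 ω := fun ω => le_add_of_nonneg_left (hU1 ω)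
  have hle1' : ∀ ω, V1 ω ≤ V1 ω + V2 ω := fun ω => le_add_of_nonneg_right (hV2 ω)
  have hle2' : ∀ ω, V2 ω ≤ V1 ω + V2 ω := fun ω => le_add_of_nonneg_left (hV1 ω)
  exact (isBigO_of_nonneg_of_le (fun _ => jointTail_nonneg _ _ _ _) hsplit).trans
    ((((hpiece h11 hle1 hle1').add (hpiece h12 hle1 hle2')).add
      (hpiece h21 hle2 hle1')).add (hpiece h22 hle2 hle2'))

end Tails

/-- closure of `𝒟₂` under componentwise sums of two nonnegative,
arbitrarily dependent random vectors `(X11,X12)` and `(X21,X22)`, assuming every mixed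
pair is in `𝒟₂` and the weak kernels are weakly equivalent. -/
theorem stmt11 {Ω : Type*} [MeasureSpace Ω] [IsProbabilityMeasure (ℙ : Measure Ω)]
    (X11 X12 X21 X22 : Ω → ℝ)
    (h11 : ∀ ω, 0 ≤ X11 ω) (h12 : ∀ ω, 0 ≤ X12 ω)
    (h21 : ∀ ω, 0 ≤ X21 ω) (h22 : ∀ ω, 0 ≤ X22 ω)
    (hD1 : D2 X11 X12) (hD2 : D2 X21 X22)
    (hD3 : D2 X11 X22) (hD4 : D2 X21 X12)
    (hkern : WeakEquiv (rtail X11) (rtail X21)) :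
    D2 (fun ω => X11 ω + X21 ω) (fun ω => X12 ω + X22 ω) := by
  obtain ⟨⟨F0, hF0pos, hF0dv, hX11F0, hX12F0⟩, hdv11, hdv12, hj11⟩ := hD1
  obtain ⟨⟨F0', -, -, hX21F0', hX22F0'⟩, hdv21, hdv22, hj22⟩ := hD2
  obtain ⟨-, -, -, hj12⟩ := hD3
  obtain ⟨-, -, -, hj21⟩ := hD4
  have hX22X12 : WeakEquiv (rtail X22) (rtail X12) :=
    hX22F0'.trans (hX21F0'.symm.trans (hkern.symm.trans (hX11F0.trans hX12F0.symm)))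
  have hS1 : WeakEquiv (rtail fun ω => X11 ω + X21 ω) F0 :=
    (weakEquiv_rtail_add h21 hdv11 hdv21 hkern.2).trans hX11F0
  have hS2 : WeakEquiv (rtail fun ω => X12 ω + X22 ω) F0 :=
    (weakEquiv_rtail_add h22 hdv12 hdv22 hX22X12.1).trans hX12F0
  exact ⟨⟨F0, hF0pos, hF0dv, hS1, hS2⟩, hF0dv.of_weakEquiv hS1, hF0dv.of_weakEquiv hS2,
    JointDomVar.add h11 h21 h12 h22 hj11 hj12 hj21 hj22⟩
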